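/- Let E be a PBES containing an equation σX(d⃗:D) = ξ, let φ be a subformula of ξ whose free data variables are among d⃗, and let X̃ be a predicate variable not occurring in E. Then the PBES E' obtained from E by replacing the occurrence of φ in ξ by X̃(d⃗) and inserting the new equation σX̃(d⃗:D) = φ into the same block as the equation for X satisfies E' ≡ E: every predicate variable bound in E has the same solution in E' as in E. -/

import Mathlib

/-!
Parameterised Boolean Equation Systems (PBESs) and the substitution lemma:
replacing a subformula `φ` of a right-hand side by a call `X̃(d⃗)` to a fresh
equation `σ X̃(d⃗:D) = φ` (inserted in the same block) preserves the solution.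

Predicate variables are natural numbers.  Data variables are natural numbers
as well: a data environment is a valuation `ε : ℕ → Dv` of the data
variables, and the parameter vector `d⃗` of an equation is the whole
valuation.  Data terms are represented semantically: a data term of sort
`Bool` is a function `(ℕ → Dv) → Prop`, and the parameter vector `e⃗` of a
variable instantiation `X(e⃗)` is a function `(ℕ → Dv) → (ℕ → Dv)`.  A
quantifier `∀ i. φ` / `∃ i. φ` binds the data variable `i` by updating the
valuation at `i`.
-/

namespace PBES

/-- Predicate formulae
`φ ::= b | X(e⃗) | φ ∧ φ | φ ∨ φ | ∀ d:D. φ | ∃ d:D. φ`. -/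
inductive PF (Dv : Type) : Type
  | simple : ((ℕ → Dv) → Prop) → PF Dv
  | var    : ℕ → ((ℕ → Dv) → (ℕ → Dv)) → PF Dv
  | and    : PF Dv → PF Dv → PF Dv
  | or     : PF Dv → PF Dv → PF Dv
  | all    : ℕ → PF Dv → PF Dv
  | ex     : ℕ → PF Dv → PF Dv

variable {Dv : Type}

/-- Predicate environments. -/
abbrev PEnv (Dv : Type) := ℕ → (ℕ → Dv) → Prop

/-- Semantics of predicate formulae. -/
def sem : PF Dv → PEnv Dv → (ℕ → Dv) → Prop
  | .simple b, _, ε => b ε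
  | .var x e, η, ε => η x (e ε)
  | .and φ ψ, η, ε => sem φ η ε ∧ sem ψ η ε
  | .or φ ψ, η, ε => sem φ η ε ∨ sem ψ η ε
  | .all i φ, η, ε => ∀ v : Dv, sem φ η (Function.update ε i v)
  | .ex i φ, η, ε => ∃ v : Dv, sem φ η (Function.update ε i v)

/-- An equation `σ X(d⃗:D) = φ`; `sign = true` encodes `μ`,
`sign = false` encodes `ν`.  Blocks of a PBES are maximal subsequences of
consecutive equations with the same sign. -/
structure Eqn (Dv : Type) : Type where
  sign : Bool
  name : ℕ
  rhs : PF Dv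

/-- The least fixed point of `f` on a complete lattice
(for monotone `f` this is the usual least fixed point). -/
def lfp' {α : Type _} [CompleteLattice α] (f : α → α) : α :=
  sInf {a | f a ≤ a}

/-- The greatest fixed point of `f` on a complete lattice. -/
def gfp' {α : Type _} [CompleteLattice α] (f : α → α) : α :=
  sSup {a | a ≤ f a}

/-- The solution of a PBES: the equations are solved in sequence order with
earlier equations outermost; each equation `σ X(d⃗) = φ` is solved as the
least (`μ`) or greatest (`ν`) fixed point of the map induced by `φ` on the
complete lattice `(ℕ → Dv) → Prop`, in the environment determined by the
surrounding equations. -/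
def solve : List (Eqn Dv) → PEnv Dv → PEnv Dv
  | [], η => η
  | e :: E, η =>
    solve E (Function.update η e.name
      (if e.sign then
        lfp' (fun p => sem e.rhs (solve E (Function.update η e.name p)))
       else
        gfp' (fun p => sem e.rhs (solve E (Function.update η e.name p)))))

/-- `occurs y φ`: the predicate variable `y` occurs in `φ`. -/
def occurs (y : ℕ) : PF Dv → Prop
  | .simple _ => False
  | .var x _ => x = y
  | .and φ ψ => occurs y φ ∨ occurs y ψ
  | .or φ ψ => occurs y φ ∨ occurs y ψ
  | .all _ φ => occurs y φ
  | .ex _ φ => occurs y φ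

/-- One-hole contexts for predicate formulae: `ξ = C.fill φ` exhibits `φ` as
(an occurrence of) a subformula of `ξ`. -/
inductive Ctx (Dv : Type) : Type
  | hole : Ctx Dv
  | andL : Ctx Dv → PF Dv → Ctx Dv
  | andR : PF Dv → Ctx Dv → Ctx Dv
  | orL  : Ctx Dv → PF Dv → Ctx Dv
  | orR  : PF Dv → Ctx Dv → Ctx Dv
  | all  : ℕ → Ctx Dv → Ctx Dv
  | ex   : ℕ → Ctx Dv → Ctx Dv

/-- Filling the hole of a context with a formula. -/
def Ctx.fill : Ctx Dv → PF Dv → PF Dv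
  | .hole, φ => φ
  | .andL C ψ, φ => .and (C.fill φ) ψ
  | .andR ψ C, φ => .and ψ (C.fill φ)
  | .orL C ψ, φ => .or (C.fill φ) ψ
  | .orR ψ C, φ => .or ψ (C.fill φ)
  | .all i C, φ => .all i (C.fill φ)
  | .ex i C, φ => .ex i (C.fill φ)

/-- The data variables bound by quantifiers above the hole of a context. -/
def Ctx.binders : Ctx Dv → Set ℕ
  | .hole => ∅
  | .andL C _ => C.binders
  | .andR _ C => C.binders
  | .orL C _ => C.binders
  | .orR _ C => C.binders
  | .all i C => insert i C.binders
  | .ex i C => insert i C.binders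

/-!
The fresh variable `X̃` occurs neither in `φ` nor anywhere else, so the map whose fixed point
defines it is constant: whatever the sign, the solution of `X̃` is just `φ` evaluated in the
environment of the enclosing equations. Substituting this back, the call `X̃(d⃗)` in the new
right-hand side of `X` means exactly `φ`, so the two systems agree everywhere except at `X̃`;
since no earlier equation mentions `X̃`, this agreement propagates outwards through `E₁`.
-/

open Function

theorem occurs_fill {y : ℕ} {φ : PF Dv} (h : occurs y φ) (C : Ctx Dv) :
    occurs y (C.fill φ) := by
  induction C with
  | hole => exact h
  | andL C ψ ih | orL C ψ ih => exact Or.inl ih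
  | andR ψ C ih | orR ψ C ih => exact Or.inr ih
  | all i C ih | ex i C ih => exact ih

theorem sem_congr {ψ : PF Dv} {ρ ρ' : PEnv Dv} (h : ∀ z, occurs z ψ → ρ z = ρ' z) :
    sem ψ ρ = sem ψ ρ' := by
  induction ψ with
  | simple b => rfl
  | var x e => funext ε; simp only [sem, h x rfl]
  | and φ ψ ih₁ ih₂ | or φ ψ ih₁ ih₂ =>
    funext ε
    simp only [sem, ih₁ fun z hz => h z (.inl hz), ih₂ fun z hz => h z (.inr hz)]
  | all i φ ih | ex i φ ih => funext ε; simp only [sem, ih h]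

theorem sem_eq_of_not_occurs {ψ : PF Dv} {xt : ℕ} (hψ : ¬ occurs xt ψ) {ρ ρ' : PEnv Dv}
    (h : ∀ z ≠ xt, ρ z = ρ' z) : sem ψ ρ = sem ψ ρ' :=
  sem_congr fun z hz => h z (by rintro rfl; exact hψ hz)

theorem sem_update_of_not_occurs {ψ : PF Dv} {xt : ℕ} (hψ : ¬ occurs xt ψ) (ρ : PEnv Dv)
    (q : (ℕ → Dv) → Prop) : sem ψ (update ρ xt q) = sem ψ ρ :=
  sem_eq_of_not_occurs hψ fun _ hz => update_of_ne hz _ _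

theorem Ctx.sem_fill_congr (C : Ctx Dv) {φ ψ : PF Dv} {ρ : PEnv Dv} (h : sem φ ρ = sem ψ ρ) :
    sem (C.fill φ) ρ = sem (C.fill ψ) ρ := by
  induction C with
  | hole => exact h
  | andL C χ ih | andR χ C ih | orL C χ ih | orR χ C ih | all i C ih | ex i C ih =>
    funext ε; simp only [Ctx.fill, sem, ih]

theorem sem_fill_var_update {C : Ctx Dv} {φ : PF Dv} {xt : ℕ} (hξ : ¬ occurs xt (C.fill φ))
    (ρ : PEnv Dv) :
    sem (C.fill (.var xt fun ε => ε)) (update ρ xt (sem φ ρ)) = sem (C.fill φ) ρ := by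
  have hφ : ¬ occurs xt φ := fun h => hξ (occurs_fill h C)
  calc sem (C.fill (.var xt fun ε => ε)) (update ρ xt (sem φ ρ))
      = sem (C.fill φ) (update ρ xt (sem φ ρ)) :=
        C.sem_fill_congr <| by
          funext ε; simp only [sem, update_self, sem_update_of_not_occurs hφ]
    _ = sem (C.fill φ) ρ := sem_update_of_not_occurs hξ ρ _

theorem lfp'_const {α : Type _} [CompleteLattice α] (c : α) : lfp' (fun _ : α => c) = c :=
  le_antisymm (sInf_le le_rfl) (le_sInf fun _ ha => ha)

theorem gfp'_const {α : Type _} [CompleteLattice α] (c : α) : gfp' (fun _ : α => c) = c :=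
  le_antisymm (sSup_le fun _ ha => ha) (le_sSup le_rfl)

theorem solve_update_of_fresh {E : List (Eqn Dv)} {xt : ℕ} (hname : xt ∉ E.map Eqn.name)
    (hocc : ∀ e ∈ E, ¬ occurs xt e.rhs) (η : PEnv Dv) (q : (ℕ → Dv) → Prop) :
    solve E (update η xt q) = update (solve E η) xt q := by
  induction E generalizing η with
  | nil => rfl
  | cons e E ih =>
    simp only [List.map_cons, List.mem_cons, not_or, forall_eq_or_imp] at hname hocc
    have commute : ∀ (η' : PEnv Dv) p,
        solve E (update (update η' xt q) e.name p) = update (solve E (update η' e.name p)) xt q :=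
      fun η' p => by rw [update_comm hname.1, ih hname.2 hocc.2]
    simp only [solve, commute, sem_update_of_not_occurs hocc.1]

theorem solve_cons_of_fresh {E : List (Eqn Dv)} {σ : Bool} {xt : ℕ} {φ : PF Dv}
    (hname : xt ∉ E.map Eqn.name) (hocc : ∀ e ∈ E, ¬ occurs xt e.rhs) (hφ : ¬ occurs xt φ)
    (η : PEnv Dv) :
    solve (⟨σ, xt, φ⟩ :: E) η = update (solve E η) xt (sem φ (solve E η)) := by
  simp only [solve, solve_update_of_fresh hname hocc, sem_update_of_not_occurs hφ, lfp'_const,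
    gfp'_const, ite_self]

theorem solve_substitute_apply {E : List (Eqn Dv)} {σ : Bool} {x xt : ℕ} {C : Ctx Dv}
    {φ : PF Dv} (hname : xt ∉ E.map Eqn.name) (hocc : ∀ e ∈ E, ¬ occurs xt e.rhs)
    (hξ : ¬ occurs xt (C.fill φ)) (η : PEnv Dv) :
    ∀ z ≠ xt, solve (⟨σ, x, C.fill (.var xt fun ε => ε)⟩ :: ⟨σ, xt, φ⟩ :: E) η z
      = solve (⟨σ, x, C.fill φ⟩ :: E) η z := by
  have hφ : ¬ occurs xt φ := fun h => hξ (occurs_fill h C)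
  have substitute : ∀ ρ, sem (C.fill (.var xt fun ε => ε)) (solve (⟨σ, xt, φ⟩ :: E) ρ)
      = sem (C.fill φ) (solve E ρ) := fun ρ => by
    rw [solve_cons_of_fresh hname hocc hφ, sem_fill_var_update hξ]
  intro z hz
  show solve _ (update η x _) z = solve _ (update η x _) z
  simp only [substitute]
  rw [solve_cons_of_fresh hname hocc hφ, update_of_ne hz]

theorem solve_append_apply_eq {E F G : List (Eqn Dv)} {xt : ℕ}
    (hocc : ∀ e ∈ E, ¬ occurs xt e.rhs) (hFG : ∀ η, ∀ z ≠ xt, solve F η z = solve G η z)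
    (η : PEnv Dv) : ∀ z ≠ xt, solve (E ++ F) η z = solve (E ++ G) η z := by
  induction E generalizing η with
  | nil => exact hFG η
  | cons e E ih =>
    simp only [List.mem_cons, forall_eq_or_imp] at hocc
    have agree : ∀ p, sem e.rhs (solve (E ++ F) (update η e.name p))
        = sem e.rhs (solve (E ++ G) (update η e.name p)) :=
      fun p => sem_eq_of_not_occurs hocc.1 (ih hocc.2 _)
    intro z hz
    simp only [List.cons_append, solve, agree]
    exact ih hocc.2 _ z hz

theorem subformula_substitution_preserves_solution_general
    (E₁ E₂ : List (Eqn Dv)) (σ : Bool) (x : ℕ) (C : Ctx Dv) (φ : PF Dv)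
    (xt : ℕ)
    (hfresh_lhs : xt ∉ (E₁ ++ ⟨σ, x, C.fill φ⟩ :: E₂).map Eqn.name)
    (hfresh_occ : ∀ e ∈ E₁ ++ (⟨σ, x, C.fill φ⟩ : Eqn Dv) :: E₂,
      ¬ occurs xt e.rhs)
    (η : PEnv Dv) (y : ℕ)
    (hy : y ∈ (E₁ ++ ⟨σ, x, C.fill φ⟩ :: E₂).map Eqn.name) :
    solve (E₁ ++ ⟨σ, x, C.fill (.var xt fun ε => ε)⟩ :: ⟨σ, xt, φ⟩ :: E₂) η y
      = solve (E₁ ++ ⟨σ, x, C.fill φ⟩ :: E₂) η y := by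
  have hyxt : y ≠ xt := by
    rintro rfl
    exact hfresh_lhs hy
  simp only [List.map_append, List.map_cons, List.mem_append, List.mem_cons, not_or]
    at hfresh_lhs
  simp only [List.mem_append, List.mem_cons, or_imp, forall_and, forall_eq] at hfresh_occ
  obtain ⟨hocc₁, hξ, hocc₂⟩ := hfresh_occ
  exact solve_append_apply_eq hocc₁ (solve_substitute_apply hfresh_lhs.2.2 hocc₂ hξ) η y hyxt

/-- **Introducing an equation for a subformula preserves the solution.**
Let `E = E₁ ++ (σ X(d⃗:D) = ξ) :: E₂` be a PBES (with pairwise distinct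
left-hand side variables), let `φ` be a subformula of `ξ` (an occurrence
`ξ = C.fill φ`) whose free data variables are among `d⃗` (i.e. `φ` is
independent of the data variables bound by quantifiers above the hole of
`C`), and let `X̃` be a predicate variable not occurring in `E`.  Then the
PBES `E'` obtained from `E` by replacing the occurrence of `φ` in `ξ` by
`X̃(d⃗)` and inserting the new equation `σ X̃(d⃗:D) = φ` into the same block
as the equation for `X` satisfies `E' ≡ E`: every predicate variable bound in
`E` has the same solution in `E'` as in `E` (under every predicate
environment `η`). -/
theorem subformula_substitution_preserves_solution
    (E₁ E₂ : List (Eqn Dv)) (σ : Bool) (x : ℕ) (C : Ctx Dv) (φ : PF Dv)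
    (xt : ℕ)
    (hnodup : ((E₁ ++ ⟨σ, x, C.fill φ⟩ :: E₂).map Eqn.name).Nodup)
    (hfresh_lhs : xt ∉ (E₁ ++ ⟨σ, x, C.fill φ⟩ :: E₂).map Eqn.name)
    (hfresh_occ : ∀ e ∈ E₁ ++ (⟨σ, x, C.fill φ⟩ : Eqn Dv) :: E₂,
      ¬ occurs xt e.rhs)
    (hfree : ∀ i ∈ C.binders, ∀ (η : PEnv Dv) (ε : ℕ → Dv) (v : Dv),
      sem φ η (Function.update ε i v) = sem φ η ε)
    (η : PEnv Dv) (y : ℕ)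
    (hy : y ∈ (E₁ ++ ⟨σ, x, C.fill φ⟩ :: E₂).map Eqn.name) :
    solve (E₁ ++ ⟨σ, x, C.fill (.var xt fun ε => ε)⟩ :: ⟨σ, xt, φ⟩ :: E₂) η y
      = solve (E₁ ++ ⟨σ, x, C.fill φ⟩ :: E₂) η y :=
  subformula_substitution_preserves_solution_general E₁ E₂ σ x C φ xt hfresh_lhs hfresh_occ η y hy

end PBES
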